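/- Let N ∈ ℕ and let u⁰, u¹, …, u^N be real numbers. Then the N×N matrix U whose (ℓ,k)-entry (for ℓ,k = 1,…,N) is (u^ℓ)^k − (u⁰)^k has determinant equal to the product over 0 ≤ ℓ < m ≤ N of (u^m − u^ℓ). -/

import Mathlib

/-!
Subtracting row 0 from every other row of the Vandermonde matrix of `u` does not change its
determinant and turns its first column into `(1, 0, …, 0)`; expanding along that column leaves
exactly `U`, so `det U` is the Vandermonde determinant of `u`.
-/

open Finset

theorem Finset.prod_filter_fst_lt_snd {ι M : Type*} [Fintype ι] [Preorder ι]
    [LocallyFiniteOrderTop ι] [DecidableLT ι] [CommMonoid M] (f : ι → ι → M) :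
    ∏ p ∈ univ.filter (fun p : ι × ι => p.1 < p.2), f p.1 p.2 = ∏ i, ∏ j ∈ Ioi i, f i j := by
  rw [prod_filter, ← univ_product_univ, prod_product]
  refine prod_congr rfl fun i _ => ?_
  rw [← prod_filter]
  congr 1
  ext j
  simp

namespace Matrix

variable {R : Type*} [CommRing R] {n : ℕ}

theorem det_eq_det_submatrix_succ_of_col_zero {A : Matrix (Fin (n + 1)) (Fin (n + 1)) R}
    (h00 : A 0 0 = 1) (hsucc : ∀ i : Fin n, A i.succ 0 = 0) :
    A.det = (A.submatrix Fin.succ Fin.succ).det := by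
  simp [det_succ_column_zero A, Fin.sum_univ_succ, h00, hsucc]

theorem det_of_pow_succ_sub_pow_succ (u : Fin (n + 1) → R) :
    (of fun i k : Fin n => u i.succ ^ ((k : ℕ) + 1) - u 0 ^ ((k : ℕ) + 1)).det =
      (vandermonde u).det := by
  set C : Matrix (Fin (n + 1)) (Fin (n + 1)) R :=
    of fun i j => if i = 0 then u 0 ^ (j : ℕ) else u i ^ (j : ℕ) - u 0 ^ (j : ℕ)
  have hC : (vandermonde u).det = C.det :=
    det_eq_of_forall_row_eq_smul_add_const (fun i => if i = 0 then 0 else 1) 0 (by simp)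
      fun i j => by by_cases hi : i = 0 <;> simp [C, hi]
  rw [hC, det_eq_det_submatrix_succ_of_col_zero (by simp [C]) (by simp [C])]
  rfl

end Matrix

/-- The determinant of the N×N matrix with entries (u^(ℓ))^k − (u^(0))^k,
for ℓ,k = 1,…,N, equals the Vandermonde product ∏_{0 ≤ ℓ < m ≤ N} (u^(m) − u^(ℓ)). -/
theorem stmt_0 (N : ℕ) (u : Fin (N + 1) → ℝ) :
    (Matrix.of (fun ℓ k : Fin N =>
        u ℓ.succ ^ ((k : ℕ) + 1) - u 0 ^ ((k : ℕ) + 1))).det =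
      ∏ p ∈ Finset.univ.filter
          (fun p : Fin (N + 1) × Fin (N + 1) => p.1 < p.2),
        (u p.2 - u p.1) := by
  rw [Matrix.det_of_pow_succ_sub_pow_succ, Matrix.det_vandermonde,
    Finset.prod_filter_fst_lt_snd fun i j => u j - u i]
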